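/- arXiv:1407.2661 — 2 statements merged into one kernel-verified Lean document; each statement's English description precedes it below -/
import Mathlib

section
/- Assume only condition (a), i.e. e''Λe' = 0. Then for every left Λ-module N, the Λ-submodule e'N satisfies pd_Λ e'N = pd_{Λ'} e'N (both possibly infinite). -/
universe u v

open Module

section Core

variable (R : Type u) [Ring R]

/-- The Jacobson radical of a ring, as a (left) ideal. -/
noncomputable def ringJac : Ideal R := (⊥ : Ideal R).jacobson

/-- `π : P → N` is a projective cover: `P` is projective, `π` is surjective and
its kernel is superfluous, i.e. contained in `rad(R)·P`. -/
def IsProjCover {P : Type v} {N : Type v} [AddCommGroup P] [Module R P]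
    [AddCommGroup N] [Module R N] (π : P →ₗ[R] N) : Prop :=
  Function.Surjective π ∧ Module.Projective R P ∧
    LinearMap.ker π ≤ (ringJac R) • (⊤ : Submodule R P)

/-- `X` is a first syzygy of `N`, i.e. isomorphic to the kernel of a projective cover of `N`. -/
def IsSyz1 (N : Type v) [AddCommGroup N] [Module R N]
    (X : Type v) [AddCommGroup X] [Module R X] : Prop :=
  ∃ (P : Type v) (_ : AddCommGroup P) (_ : Module R P) (π : P →ₗ[R] N),
    IsProjCover R π ∧ Nonempty (X ≃ₗ[R] LinearMap.ker π)

/-- `X` is an `n`-th syzygy of `N` (computed via projective covers); `Ω⁰(N) = N`. -/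
def IsSyz (n : ℕ) (N : Type v) [AddCommGroup N] [Module R N]
    (X : Type v) [AddCommGroup X] [Module R X] : Prop :=
  ∃ (M : Fin (n+1) → Type v) (_ : ∀ i, AddCommGroup (M i)) (_ : ∀ i, Module R (M i)),
    Nonempty (M 0 ≃ₗ[R] N) ∧ Nonempty (M (Fin.last n) ≃ₗ[R] X) ∧
    ∀ i : Fin n, IsSyz1 R (M i.castSucc) (M i.succ)

/-- Projective dimension of a module, as an element of `ℕ∞`
(the least `n` such that a minimal `n`-th syzygy is projective; `⊤` if none exists). -/
noncomputable def pdim (M : Type v) [AddCommGroup M] [Module R M] : ℕ∞ :=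
  sInf {d : ℕ∞ | ∃ n : ℕ, d = n ∧ ∃ (X : Type v) (_ : AddCommGroup X) (_ : Module R X),
    IsSyz R n M X ∧ Module.Projective R X}

/-- The little finitistic dimension of `R`: the supremum of the finite projective
dimensions attained on finitely generated left `R`-modules. -/
noncomputable def findim : ℕ∞ :=
  sSup {d : ℕ∞ | ∃ (M : Type u) (_ : AddCommGroup M) (_ : Module R M),
    Module.Finite R M ∧ pdim R M = d ∧ d ≠ ⊤}

/-- The big finitistic dimension of `R`: the supremum of the finite projective
dimensions attained on arbitrary left `R`-modules. -/
noncomputable def bigFindim : ℕ∞ :=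
  sSup {d : ℕ∞ | ∃ (M : Type u) (_ : AddCommGroup M) (_ : Module R M),
    pdim R M = d ∧ d ≠ ⊤}

/-- A primitive idempotent: a nonzero idempotent which is not the sum of two nonzero
orthogonal idempotents. -/
def IsPrimitiveIdem (e : R) : Prop :=
  IsIdempotentElem e ∧ e ≠ 0 ∧
    ∀ f g : R, IsIdempotentElem f → IsIdempotentElem g → f * g = 0 → g * f = 0 →
      f + g = e → f = 0 ∨ g = 0

/-- The top `M/JM` of a module. -/
noncomputable def topQuot (M : Type v) [AddCommGroup M] [Module R M] : Type v :=
  M ⧸ ((ringJac R) • (⊤ : Submodule R M))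

noncomputable instance topQuotAddCommGroup (M : Type v) [AddCommGroup M] [Module R M] :
    AddCommGroup (topQuot R M) :=
  inferInstanceAs (AddCommGroup (M ⧸ ((ringJac R) • (⊤ : Submodule R M))))

noncomputable instance topQuotModule (M : Type v) [AddCommGroup M] [Module R M] :
    Module R (topQuot R M) :=
  inferInstanceAs (Module R (M ⧸ ((ringJac R) • (⊤ : Submodule R M))))

end Core

section AlgCore

variable (K : Type u) [Field K] (Λ : Type u) [Ring Λ] [Algebra K Λ]

/-- The `K`-dimension (rank) of `e·(M/JM)`: the multiplicity of the top of `M` at the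
idempotent `e`. -/
noncomputable def eTopRank (e : Λ) (M : Type v) [AddCommGroup M] [Module Λ M] : Cardinal :=
  let _ : Module K (topQuot Λ M) := Module.compHom _ (algebraMap K Λ)
  Module.rank K ↥(Submodule.span K (Set.range (fun x : topQuot Λ M => e • x)))

/-- The `n`-generated finitistic dimension of the `K`-algebra `Λ`: the supremum of the
finite projective dimensions attained on finitely generated left `Λ`-modules whose top
multiplicities are all at most `n`. -/
noncomputable def findimN (n : ℕ) : ℕ∞ :=
  sSup {d : ℕ∞ | ∃ (M : Type u) (_ : AddCommGroup M) (_ : Module Λ M),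
    Module.Finite Λ M ∧ pdim Λ M = d ∧ d ≠ ⊤ ∧
    ∀ e : Λ, IsPrimitiveIdem Λ e → eTopRank K Λ e M ≤ n}

end AlgCore

section CornerDefs

variable {Λ : Type u} [Ring Λ]

/-- The corner ring `eΛe` attached to an idempotent `e` of `Λ`. -/
def Corner (e : Λ) (_ : IsIdempotentElem e) : Type u := {x : Λ // e * x = x ∧ x * e = x}

namespace Corner

variable {e : Λ} {he : IsIdempotentElem e}

instance : Zero (Corner e he) := ⟨⟨0, by simp⟩⟩
instance : Add (Corner e he) :=
  ⟨fun x y => ⟨x.1 + y.1, by rw [mul_add, x.2.1, y.2.1], by rw [add_mul, x.2.2, y.2.2]⟩⟩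
instance : Neg (Corner e he) :=
  ⟨fun x => ⟨-x.1, by rw [mul_neg, x.2.1], by rw [neg_mul, x.2.2]⟩⟩
instance : Mul (Corner e he) :=
  ⟨fun x y => ⟨x.1 * y.1, by rw [← mul_assoc, x.2.1], by rw [mul_assoc, y.2.2]⟩⟩
instance : One (Corner e he) := ⟨⟨e, he, he⟩⟩

instance instRing : Ring (Corner e he) :=
  Ring.ofMinimalAxioms
    (fun a b c => Subtype.ext (add_assoc a.1 b.1 c.1))
    (fun a => Subtype.ext (zero_add a.1))
    (fun a => Subtype.ext (neg_add_cancel a.1))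
    (fun a b c => Subtype.ext (mul_assoc a.1 b.1 c.1))
    (fun a => Subtype.ext a.2.1)
    (fun a => Subtype.ext a.2.2)
    (fun a b c => Subtype.ext (mul_add a.1 b.1 c.1))
    (fun a b c => Subtype.ext (add_mul a.1 b.1 c.1))

variable (K : Type u) [CommSemiring K] [Algebra K Λ]

instance : SMul K (Corner e he) :=
  ⟨fun k x => ⟨k • x.1, by rw [mul_smul_comm, x.2.1], by rw [smul_mul_assoc, x.2.2]⟩⟩

instance instModule : Module K (Corner e he) where
  one_smul x := Subtype.ext (one_smul K x.1)
  mul_smul a b x := Subtype.ext (mul_smul a b x.1)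
  smul_zero a := Subtype.ext (smul_zero a)
  smul_add a x y := Subtype.ext (smul_add a x.1 y.1)
  add_smul a b x := Subtype.ext (add_smul a b x.1)
  zero_smul x := Subtype.ext (zero_smul K x.1)

instance instAlgebra : Algebra K (Corner e he) :=
  Algebra.ofModule (fun k x y => Subtype.ext (smul_mul_assoc k x.1 y.1))
    (fun k x y => Subtype.ext (mul_smul_comm k x.1 y.1))

end Corner

/-- The `e`-component `eN` of a left `Λ`-module `N`, as an additive subgroup. -/
def cptSubgroup (e : Λ) (N : Type v) [AddCommGroup N] [Module Λ N] : AddSubgroup N where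
  carrier := {n | e • n = n}
  add_mem' := fun {a b} ha hb => by
    simp only [Set.mem_setOf_eq] at *; rw [smul_add, ha, hb]
  zero_mem' := smul_zero e
  neg_mem' := fun {a} ha => by
    simp only [Set.mem_setOf_eq] at *; rw [smul_neg, ha]

/-- The `e`-component `eN` of a left `Λ`-module `N`, as a type. -/
def Cpt (e : Λ) (N : Type v) [AddCommGroup N] [Module Λ N] : Type v := ↥(cptSubgroup e N)

instance (e : Λ) (N : Type v) [AddCommGroup N] [Module Λ N] : AddCommGroup (Cpt e N) :=
  inferInstanceAs (AddCommGroup ↥(cptSubgroup e N))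

instance {e : Λ} {he : IsIdempotentElem e} (N : Type v) [AddCommGroup N] [Module Λ N] :
    SMul (Corner e he) (Cpt e N) :=
  ⟨fun a n => ⟨a.1 • n.1, by show e • (a.1 • n.1) = a.1 • n.1; rw [smul_smul, a.2.1]⟩⟩

/-- `eN` is a left module over the corner ring `eΛe`. -/
instance cptModule {e : Λ} {he : IsIdempotentElem e} (N : Type v) [AddCommGroup N]
    [Module Λ N] : Module (Corner e he) (Cpt e N) where
  one_smul n := Subtype.ext (show e • n.1 = n.1 from n.2)
  mul_smul a b n := Subtype.ext (mul_smul a.1 b.1 n.1)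
  smul_zero a := Subtype.ext (smul_zero a.1)
  smul_add a x y := Subtype.ext (smul_add a.1 x.1 y.1)
  add_smul a b n := Subtype.ext (add_smul a.1 b.1 n.1)
  zero_smul n := Subtype.ext (zero_smul Λ n.1)

/-- A `Λ`-linear map restricts to a `eΛe`-linear map on `e`-components. -/
def cptMap {e : Λ} {he : IsIdempotentElem e} {Q N : Type v} [AddCommGroup Q] [Module Λ Q]
    [AddCommGroup N] [Module Λ N] (g : Q →ₗ[Λ] N) :
    Cpt e Q →ₗ[Corner e he] Cpt e N where
  toFun q := ⟨g q.1, show e • g q.1 = g q.1 by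
    rw [← map_smul, show e • q.1 = q.1 from q.2]⟩
  map_add' x y := Subtype.ext (map_add g x.1 y.1)
  map_smul' a q := Subtype.ext (map_smul g a.1 q.1)

/-- Under condition (a), `a ↦ e'ae'` is a ring homomorphism `Λ → e'Λe'`; restriction of
scalars along it realizes every `Λ'`-module as a `Λ`-module on which `e''` acts as zero. -/
def cornerHom (e' e'' : Λ) (he' : IsIdempotentElem e') (hsum : e' + e'' = 1)
    (hA : ∀ x : Λ, e'' * x * e' = 0) : Λ →+* Corner e' he' where
  toFun a := ⟨e' * a * e', by rw [← mul_assoc, ← mul_assoc, he'], by rw [mul_assoc, he']⟩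
  map_one' := Subtype.ext (show e' * 1 * e' = e' by rw [mul_one]; exact he')
  map_zero' := Subtype.ext (show e' * 0 * e' = 0 by rw [mul_zero, zero_mul])
  map_add' a b := Subtype.ext
    (show e' * (a + b) * e' = e' * a * e' + e' * b * e' by rw [mul_add, add_mul])
  map_mul' a b := Subtype.ext (by
    have key : ∀ x : Λ, e' * x * e' = x * e' := fun x => by
      have h1 : (e' + e'') * (x * e') = x * e' := by rw [hsum, one_mul]
      have h2 : e'' * (x * e') = 0 := by rw [← mul_assoc, hA x]
      calc e' * x * e' = e' * (x * e') := by rw [mul_assoc]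
        _ = (e' + e'') * (x * e') - e'' * (x * e') := by
            rw [add_mul, add_sub_cancel_right]
        _ = x * e' := by rw [h1, h2, sub_zero]
    show e' * (a * b) * e' = e' * a * e' * (e' * b * e')
    rw [key (a * b), key a, key b, mul_assoc a e' (b * e'), ← mul_assoc e' b e', key b,
      ← mul_assoc])

end CornerDefs

/-!
Condition (a) makes `a ↦ e'ae'` a surjective ring map `Λ → Λ'` with kernel `Λe''`, so
`Λ'`-modules are the `Λ`-modules killed by `e''`, among them `e'N`. Restriction along this
map preserves projectivity (`Λ' ≅ Λe'` is a summand of `Λ`) and radicals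
(`rad Λ' = e'(rad Λ)e'`), so minimal syzygies over `Λ'` are minimal syzygies over `Λ`.
Conversely, a projective cover `π : P → M` over `Λ` of a module killed by `e''` has
`e''P ⊆ ker π ⊆ (rad Λ)P`; as `e''Λ = e''Λe''`, this iterates to `e''P ⊆ (rad Λ)ᵏP` for all
`k`, so `e''P = 0` because `rad Λ` is nilpotent. Hence the minimal syzygies of `e'N` over `Λ`
and over `Λ'` are the same modules, and so are the projective ones among them.
-/

open Function

section Jacobson

variable {R : Type*} [Ring R]

theorem smul_eq_zero_of_smul_mem_jacobson_smul [IsSemiprimaryRing R] {f : R}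
    (hf : ∀ r, f * r * f = f * r) {M : Type*} [AddCommGroup M] [Module R M]
    (h : ∀ m : M, f • m ∈ ringJac R • (⊤ : Submodule R M)) (m : M) : f • m = 0 := by
  rw [ringJac, Ideal.jacobson_bot] at h
  have hff : f * f = f := by simpa using hf 1
  have hpow : ∀ k (m : M), f • m ∈ Ring.jacobson R ^ k • (⊤ : Submodule R M) := by
    intro k
    induction k with
    | zero =>
      rw [Submodule.pow_zero, Ideal.one_eq_top, Submodule.top_smul]
      exact fun _ => trivial
    | succ k ih =>
      intro m
      rw [Ideal.IsTwoSided.pow_succ, Submodule.mul_smul, ← hff, mul_smul]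
      refine Submodule.smul_induction_on (p := fun v => f • v ∈ _) (h m)
        (fun r hr q _ => ?_) (fun a b ha hb => by rw [smul_add]; exact add_mem ha hb)
      rw [smul_smul, ← hf, mul_smul]
      exact Submodule.smul_mem_smul (Ideal.mul_mem_left _ f hr) (ih q)
  obtain ⟨n, hn⟩ := IsSemiprimaryRing.isNilpotent (R := R)
  simpa [hn] using hpow n m

theorem IsProjCover.smul_eq_zero [IsSemiprimaryRing R] {f : R} (hf : ∀ r, f * r * f = f * r)
    {P N : Type v} [AddCommGroup P] [Module R P] [AddCommGroup N] [Module R N]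
    {π : P →ₗ[R] N} (hπ : IsProjCover R π) (hN : ∀ n : N, f • n = 0) (p : P) :
    f • p = 0 :=
  smul_eq_zero_of_smul_mem_jacobson_smul hf
    (fun p => hπ.2.2 (by rw [LinearMap.mem_ker, map_smul, hN])) p

theorem Corner.val_mem_ringJac {e : R} {he : IsIdempotentElem e} {x : Corner e he}
    (hx : x ∈ ringJac (Corner e he)) : x.1 ∈ ringJac R := by
  rw [ringJac, Ideal.mem_jacobson_iff] at hx ⊢
  intro y
  obtain ⟨w, hw⟩ := hx ⟨e * y * e, by rw [← mul_assoc, ← mul_assoc, he.eq], by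
    rw [mul_assoc, he.eq]⟩
  -- `w` is a left inverse of `e + (eye)x` in the corner, and `1 - yxw` one of `1 + yx` in `R`.
  have hw' : w.1 + w.1 * y * x.1 = e := by
    have h0 := Ideal.mem_bot.1 hw
    have h := congrArg Subtype.val h0
    change w.1 * (e * y * e) * x.1 + w.1 + -e = 0 at h
    rw [← mul_assoc, ← mul_assoc, w.2.2, mul_assoc _ e, x.2.1] at h
    rw [← sub_eq_zero, ← h]
    noncomm_ring
  refine ⟨1 - y * x.1 * w.1, (Submodule.mem_bot _).2 ?_⟩
  calc (1 - y * x.1 * w.1) * y * x.1 + (1 - y * x.1 * w.1) - 1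
      = y * x.1 - y * x.1 * (w.1 + w.1 * y * x.1) := by noncomm_ring
    _ = 0 := by rw [hw', mul_assoc, x.2.2, sub_self]

end Jacobson

section ActsThrough

variable {R S : Type*} [Ring R] [Ring S] (f : R →+* S)

def ActsThrough (M : Type*) [AddCommGroup M] [Module R M] [Module S M] : Prop :=
  ∀ (r : R) (m : M), r • m = f r • m

variable {f} {M N : Type*} [AddCommGroup M] [Module R M] [Module S M] [AddCommGroup N]
  [Module R N] [Module S N]

theorem ActsThrough.compatibleSMul (hM : ActsThrough f M) (hN : ActsThrough f N) :
    LinearMap.CompatibleSMul M N R S :=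
  ⟨fun g r a => by rw [hM, g.map_smul, hN]⟩

theorem ActsThrough.compatibleSMul_of_surjective (hf : Surjective f) (hM : ActsThrough f M)
    (hN : ActsThrough f N) : LinearMap.CompatibleSMul M N S R :=
  ⟨fun g s a => by obtain ⟨r, rfl⟩ := hf s; rw [← hM, g.map_smul, hN]⟩

theorem ActsThrough.nonempty_linearEquiv_iff (hf : Surjective f) (hM : ActsThrough f M)
    (hN : ActsThrough f N) : Nonempty (M ≃ₗ[R] N) ↔ Nonempty (M ≃ₗ[S] N) :=
  have := hM.compatibleSMul hN
  have := hM.compatibleSMul_of_surjective hf hN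
  ⟨fun ⟨g⟩ => ⟨g.restrictScalars S⟩, fun ⟨g⟩ => ⟨g.restrictScalars R⟩⟩

theorem Module.Projective.of_actsThrough (hf : Surjective f) (hM : ActsThrough f M)
    [Module.Projective R M] : Module.Projective S M := by
  obtain ⟨s, hs⟩ := Module.projective_def'.1 ‹Module.Projective R M›
  have hM' : ∀ (r : R) (m : M), f r • m = r • m := fun r m => (hM r m).symm
  let σ : M →ₗ[S] M →₀ S :=
    { toFun := fun m => (s m).mapRange f f.map_zero
      map_add' := fun m n => by rw [map_add]; exact Finsupp.mapRange_add f.map_add _ _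
      map_smul' := fun c m => by
        obtain ⟨r, rfl⟩ := hf c
        ext x
        simp [hM'] }
  refine Module.projective_def'.2 ⟨σ, LinearMap.ext fun m => ?_⟩
  have hm : Finsupp.linearCombination R id (s m) = m := LinearMap.congr_fun hs m
  simpa [σ, Finsupp.linearCombination_apply, Finsupp.sum_mapRange_index, hM'] using hm

theorem ActsThrough.mem_jacobson_smul_top (hf : Surjective f) (hM : ActsThrough f M) {m : M}
    (hm : m ∈ ringJac R • (⊤ : Submodule R M)) :
    m ∈ ringJac S • (⊤ : Submodule S M) := by
  have : RingHomSurjective f := ⟨hf⟩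
  rw [ringJac, Ideal.jacobson_bot] at hm ⊢
  refine Submodule.smul_induction_on hm (fun r hr b _ => ?_) (fun _ _ => add_mem)
  rw [hM]
  exact Submodule.smul_mem_smul (Ring.map_jacobson_le f (Submodule.mem_map_of_mem hr)) trivial

end ActsThrough

section Syzygy

variable {R : Type u} [Ring R]

theorem isSyz1_iff_exists_exact {N X : Type v} [AddCommGroup N] [Module R N] [AddCommGroup X]
    [Module R X] :
    IsSyz1 R N X ↔ ∃ (P : Type v) (_ : AddCommGroup P) (_ : Module R P) (π : P →ₗ[R] N)
      (ι : X →ₗ[R] P), IsProjCover R π ∧ Injective ι ∧ Exact ι π := by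
  constructor
  · rintro ⟨P, _, _, π, hπ, ⟨g⟩⟩
    refine ⟨P, _, _, π, (LinearMap.ker π).subtype ∘ₗ g.toLinearMap, hπ,
      Subtype.val_injective.comp g.injective, LinearMap.exact_iff.2 ?_⟩
    rw [LinearMap.range_comp, LinearEquiv.range, Submodule.map_top, Submodule.range_subtype]
  · rintro ⟨P, _, _, π, ι, hπ, hι, hex⟩
    exact ⟨P, _, _, π, hπ, ⟨(LinearEquiv.ofInjective ι hι).trans
      (LinearEquiv.ofEq _ _ (LinearMap.exact_iff.1 hex).symm)⟩⟩

theorem IsSyz1.smul_eq_zero [IsSemiprimaryRing R] {f : R} (hf : ∀ r, f * r * f = f * r)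
    {X Y : Type v} [AddCommGroup X] [Module R X] [AddCommGroup Y] [Module R Y]
    (h : IsSyz1 R X Y) (hX : ∀ x : X, f • x = 0) (y : Y) : f • y = 0 := by
  obtain ⟨P, _, _, π, ι, hπ, hι, -⟩ := isSyz1_iff_exists_exact.1 h
  exact hι (by rw [map_smul, hπ.smul_eq_zero hf hX, map_zero])

theorem pdim_eq_pdim_of_iff {S : Type u} [Ring S] (M : Type v) [AddCommGroup M] [Module R M]
    [Module S M]
    (h : ∀ n : ℕ, (∃ (X : Type v) (_ : AddCommGroup X) (_ : Module R X),
        IsSyz R n M X ∧ Module.Projective R X) ↔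
      ∃ (X : Type v) (_ : AddCommGroup X) (_ : Module S X),
        IsSyz S n M X ∧ Module.Projective S X) :
    pdim R M = pdim S M := by
  unfold pdim
  congr 1
  ext d
  exact exists_congr fun n => and_congr_right fun _ => h n

end Syzygy

section CornerCondition

variable {Λ : Type u} [Ring Λ] {e' e'' : Λ}

theorem idem_mul_mul_idem (hsum : e' + e'' = 1)
    (hA : ∀ x : Λ, e'' * x * e' = 0) (a : Λ) : e' * a * e' = a * e' := by
  have h : (e' + e'') * a * e' = a * e' := by rw [hsum, one_mul]
  rwa [add_mul, add_mul, hA, add_zero] at h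

theorem compl_mul_mul_compl (hsum : e' + e'' = 1)
    (hA : ∀ x : Λ, e'' * x * e' = 0) (a : Λ) : e'' * a * e'' = e'' * a := by
  have h : e'' * a * (e' + e'') = e'' * a := by rw [hsum, mul_one]
  rwa [mul_add, hA, zero_add] at h

theorem smul_eq_self_of_forall_smul_eq_zero (hsum : e' + e'' = 1) {M : Type*} [AddCommGroup M]
    [Module Λ M] (hM : ∀ m : M, e'' • m = 0) (m : M) : e' • m = m := by
  simpa [add_smul, hM] using congrArg (· • m) hsum

abbrev cornerModule (he' : IsIdempotentElem e') (hsum : e' + e'' = 1) {M : Type*}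
    [AddCommGroup M] [Module Λ M] (hM : ∀ m : M, e'' • m = 0) : Module (Corner e' he') M where
  smul c m := c.1 • m
  one_smul := smul_eq_self_of_forall_smul_eq_zero hsum hM
  mul_smul c d := mul_smul c.1 d.1
  smul_zero c := smul_zero c.1
  smul_add c := smul_add c.1
  add_smul c d := add_smul c.1 d.1
  zero_smul := zero_smul Λ

variable {he' : IsIdempotentElem e'} {hsum : e' + e'' = 1} {hA : ∀ x : Λ, e'' * x * e' = 0}

local notation "φ" => cornerHom e' e'' he' hsum hA

theorem cornerHom_val (c : Corner e' he') : φ c.1 = c :=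
  Subtype.ext (show e' * c.1 * e' = c.1 by rw [c.2.1, c.2.2])

theorem cornerHom_surjective : Surjective φ := fun c => ⟨c.1, cornerHom_val c⟩

theorem val_cornerHom_mul (a : Λ) (c : Corner e' he') : (φ a * c).1 = a * c.1 := by
  show e' * a * e' * c.1 = a * c.1
  rw [idem_mul_mul_idem hsum hA, mul_assoc, c.2.1]

theorem ActsThrough.smul_eq_zero {M : Type*} [AddCommGroup M] [Module Λ M]
    [Module (Corner e' he') M] (hM : ActsThrough φ M) (m : M) : e'' • m = 0 := by
  have h : φ e'' = 0 := Subtype.ext (show e' * e'' * e' = 0 by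
    rw [idem_mul_mul_idem hsum hA, ← hA 1, mul_one])
  rw [hM, h, zero_smul]

theorem actsThrough_cornerModule {M : Type*} [AddCommGroup M] [Module Λ M]
    (hM : ∀ m : M, e'' • m = 0) :
    letI := cornerModule he' hsum hM
    ActsThrough φ M := by
  intro a m
  show a • m = (e' * a * e') • m
  rw [idem_mul_mul_idem hsum hA, mul_smul,
    smul_eq_self_of_forall_smul_eq_zero hsum hM]

variable {P : Type v} [AddCommGroup P] [Module Λ P] [Module (Corner e' he') P]

theorem ActsThrough.val_smul (hP : ActsThrough φ P) (c : Corner e' he') (p : P) :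
    c.1 • p = c • p := by
  rw [hP, cornerHom_val]

theorem Module.Projective.of_corner (hP : ActsThrough φ P)
    [Module.Projective (Corner e' he') P] : Module.Projective Λ P := by
  obtain ⟨s, hs⟩ := Module.projective_def'.1 ‹Module.Projective (Corner e' he') P›
  let σ : P →ₗ[Λ] P →₀ Λ :=
    { toFun := fun p => (s p).mapRange (fun c : Corner e' he' => c.1) rfl
      map_add' := fun p q => by rw [map_add]; exact Finsupp.mapRange_add (fun _ _ => rfl) _ _
      map_smul' := fun a p => by
        ext x
        simp [hP a p, val_cornerHom_mul] }
  refine Module.projective_def'.2 ⟨σ, LinearMap.ext fun p => ?_⟩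
  have hp : Finsupp.linearCombination _ id (s p) = p := LinearMap.congr_fun hs p
  simpa [σ, Finsupp.linearCombination_apply, Finsupp.sum_mapRange_index, hP.val_smul] using hp

theorem mem_jacobson_smul_top_iff_corner (hP : ActsThrough φ P) {p : P} :
    p ∈ ringJac Λ • (⊤ : Submodule Λ P) ↔
      p ∈ ringJac (Corner e' he') • (⊤ : Submodule (Corner e' he') P) := by
  refine ⟨hP.mem_jacobson_smul_top cornerHom_surjective, fun hp => ?_⟩
  refine Submodule.smul_induction_on hp (fun c hc q _ => ?_) (fun _ _ => add_mem)
  rw [← hP.val_smul]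
  exact Submodule.smul_mem_smul (Corner.val_mem_ringJac hc) trivial

theorem isProjCover_iff_corner {N : Type v} [AddCommGroup N] [Module Λ N]
    [Module (Corner e' he') N] (hP : ActsThrough φ P) (π : P →ₗ[Λ] N)
    (π' : P →ₗ[Corner e' he'] N) (hπ : ⇑π = ⇑π') :
    IsProjCover Λ π ↔ IsProjCover (Corner e' he') π' := by
  have hker : ∀ p, p ∈ LinearMap.ker π ↔ p ∈ LinearMap.ker π' := by simp [hπ]
  refine and_congr (by rw [hπ]) (and_congr ⟨fun _ => .of_actsThrough cornerHom_surjective hP,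
    fun _ => .of_corner hP⟩ ?_)
  simp only [SetLike.le_def, hker, mem_jacobson_smul_top_iff_corner hP]

end CornerCondition

section CornerSyzygy

variable {Λ : Type u} [Ring Λ] {e' e'' : Λ} {he' : IsIdempotentElem e'} {hsum : e' + e'' = 1}
  {hA : ∀ x : Λ, e'' * x * e' = 0}

local notation "φ" => cornerHom e' e'' he' hsum hA

theorem isSyz1_iff_corner [IsSemiprimaryRing Λ] {X Y : Type v} [AddCommGroup X] [Module Λ X]
    [Module (Corner e' he') X] [AddCommGroup Y] [Module Λ Y] [Module (Corner e' he') Y]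
    (hX : ActsThrough φ X) (hY : ActsThrough φ Y) :
    IsSyz1 Λ X Y ↔ IsSyz1 (Corner e' he') X Y := by
  rw [isSyz1_iff_exists_exact, isSyz1_iff_exists_exact]
  constructor
  · rintro ⟨P, _, _, π, ι, hπ, hι, hex⟩
    have hP : ∀ p : P, e'' • p = 0 :=
      hπ.smul_eq_zero (compl_mul_mul_compl hsum hA) hX.smul_eq_zero
    let _ := cornerModule he' hsum hP
    have hPφ : ActsThrough φ P := actsThrough_cornerModule hP
    have := hPφ.compatibleSMul_of_surjective cornerHom_surjective hX
    have := hY.compatibleSMul_of_surjective cornerHom_surjective hPφ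
    exact ⟨P, _, _, π.restrictScalars _, ι.restrictScalars _,
      (isProjCover_iff_corner hPφ _ _ rfl).1 hπ, hι, hex⟩
  · rintro ⟨P, _, _, π, ι, hπ, hι, hex⟩
    let _ : Module Λ P := Module.compHom P φ
    have hPφ : ActsThrough φ P := fun _ _ => rfl
    have := hPφ.compatibleSMul hX
    have := hY.compatibleSMul hPφ
    exact ⟨P, _, _, π.restrictScalars Λ, ι.restrictScalars Λ,
      (isProjCover_iff_corner hPφ _ _ rfl).2 hπ, hι, hex⟩

theorem exists_projective_syzygy_iff_corner [IsSemiprimaryRing Λ] (n : ℕ) {N : Type v}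
    [AddCommGroup N] [Module Λ N] [Module (Corner e' he') N] (hN : ActsThrough φ N) :
    (∃ (X : Type v) (_ : AddCommGroup X) (_ : Module Λ X),
        IsSyz Λ n N X ∧ Module.Projective Λ X) ↔
      ∃ (X : Type v) (_ : AddCommGroup X) (_ : Module (Corner e' he') X),
        IsSyz (Corner e' he') n N X ∧ Module.Projective (Corner e' he') X := by
  have hφ := cornerHom_surjective (he' := he') (hsum := hsum) (hA := hA)
  constructor
  · rintro ⟨X, _, _, ⟨M, _, _, ⟨e₀⟩, ⟨eₙ⟩, hstep⟩, _⟩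
    have hM : ∀ i (m : M i), e'' • m = 0 := by
      intro i
      induction i using Fin.induction with
      | zero => exact fun m => e₀.injective (by rw [map_smul, hN.smul_eq_zero, map_zero])
      | succ i ih =>
        exact (hstep i).smul_eq_zero (compl_mul_mul_compl hsum hA) ih
    have hX : ∀ x : X, e'' • x = 0 :=
      fun x => eₙ.symm.injective (by rw [map_smul, hM, map_zero])
    let _ : ∀ i, Module (Corner e' he') (M i) := fun i => cornerModule he' hsum (hM i)
    let _ := cornerModule he' hsum hX
    have hMφ : ∀ i, ActsThrough φ (M i) := fun i => actsThrough_cornerModule (hM i)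
    have hXφ : ActsThrough φ X := actsThrough_cornerModule hX
    exact ⟨X, _, _, ⟨M, _, _, ((hMφ 0).nonempty_linearEquiv_iff hφ hN).1 ⟨e₀⟩,
      ((hMφ _).nonempty_linearEquiv_iff hφ hXφ).1 ⟨eₙ⟩,
      fun i => (isSyz1_iff_corner (hMφ _) (hMφ _)).1 (hstep i)⟩, .of_actsThrough hφ hXφ⟩
  · rintro ⟨X, _, _, ⟨M, _, _, e₀, eₙ, hstep⟩, _⟩
    let _ : ∀ i, Module Λ (M i) := fun i => Module.compHom (M i) φ
    let _ : Module Λ X := Module.compHom X φ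
    have hMφ : ∀ i, ActsThrough φ (M i) := fun _ _ _ => rfl
    have hXφ : ActsThrough φ X := fun _ _ => rfl
    exact ⟨X, _, _, ⟨M, _, _, ((hMφ 0).nonempty_linearEquiv_iff hφ hN).2 e₀,
      ((hMφ _).nonempty_linearEquiv_iff hφ hXφ).2 eₙ,
      fun i => (isSyz1_iff_corner (hMφ _) (hMφ _)).2 (hstep i)⟩, .of_corner hXφ⟩

end CornerSyzygy

/-- Proposition 5(1). Under condition (a), `pd_Λ e'N = pd_{Λ'} e'N`
for every left `Λ`-module `N`. -/
theorem corner_pdim_eq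
    (K : Type) [Field K] (Λ : Type) [Ring Λ] [Algebra K Λ] [FiniteDimensional K Λ]
    (ι : Type) [Fintype ι] [DecidableEq ι] (e : ι → Λ)
    (hco : CompleteOrthogonalIdempotents e) (hprim : ∀ i, IsPrimitiveIdem Λ (e i))
    (S : Finset ι) (hS : S.Nonempty) (hS' : Sᶜ.Nonempty)
    (e' e'' : Λ) (hd' : e' = ∑ i ∈ S, e i) (hd'' : e'' = ∑ i ∈ Sᶜ, e i)
    (he' : IsIdempotentElem e') (he'' : IsIdempotentElem e'') (hsum : e' + e'' = 1)
    -- condition (a) : e''Λe' = 0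
    (hA : ∀ x : Λ, e'' * x * e' = 0)
    (N : Type) (_ : AddCommGroup N) (_ : Module Λ N) :
    (let _ : Module Λ (Cpt e' N) := Module.compHom (Cpt e' N) (cornerHom e' e'' he' hsum hA)
     pdim Λ (Cpt e' N)) = pdim (Corner e' he') (Cpt e' N) := by
  have : IsArtinianRing Λ := isArtinian_of_tower K inferInstance
  let _ : Module Λ (Cpt e' N) := Module.compHom (Cpt e' N) (cornerHom e' e'' he' hsum hA)
  have hN : ActsThrough (cornerHom e' e'' he' hsum hA) (Cpt e' N) := fun _ _ => rfl
  exact pdim_eq_pdim_of_iff (Cpt e' N) fun n => exists_projective_syzygy_iff_corner n hN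
end

section
/- Assume (E', E'') is a stacking partition of Λ (conditions (a) and (b)). Then for every n ≥ 1, the n-generated finitistic dimensions satisfy fin dim_n Λ' ≤ fin dim_n Λ. -/
universe u v

open Module

/-! Condition (a) makes `Λ` upper triangular, so `ρ : a ↦ e'ae'` is a surjective ring
homomorphism `Λ → Λ'`, and restriction along `ρ` identifies `Λ'`-modules with the `Λ`-modules
annihilated by `e''`. This identification preserves finite generation, the radical
(`J(Λ') = ρ(J(Λ))`), projectivity (`Λ' ≅ Λe'` is a summand of `Λ`) and projective covers: a
projective cover of a module annihilated by `e''` is itself annihilated by `e''`, by Nakayama's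
lemma for the nilpotent radical of the Artinian ring `Λ`. Hence minimal syzygies, projective
dimensions and tops agree on both sides. Finally a primitive idempotent `g` of `Λ` is sent by `ρ`
to `0` or to a primitive idempotent of `Λ'`, so the bound on top multiplicities carries over. -/

theorem Submodule.eq_bot_of_le_smul_of_isNilpotent {R M : Type*} [Ring R] [AddCommGroup M]
    [Module R M] {I : Ideal R} (hI : IsNilpotent I) {N : Submodule R M} (hN : N ≤ I • N) :
    N = ⊥ := by
  obtain ⟨k, hk⟩ := hI
  have hpow : ∀ n : ℕ, N ≤ I ^ n • N := by
    intro n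
    induction n with
    | zero => rw [Submodule.pow_zero, Ideal.one_eq_top, Submodule.top_smul]
    | succ n ih =>
      rw [Submodule.pow_succ, Submodule.mul_smul]
      exact ih.trans (Submodule.smul_mono le_rfl hN)
  simpa [hk] using hpow k

theorem isSyz1_iff {R : Type u} [Ring R] {N X : Type v} [AddCommGroup N] [Module R N]
    [AddCommGroup X] [Module R X] :
    IsSyz1 R N X ↔ ∃ (P : Type v) (_ : AddCommGroup P) (_ : Module R P) (π : P →ₗ[R] N)
      (ι : X →ₗ[R] P), IsProjCover R π ∧ Function.Injective ι ∧ Function.Exact ι π := by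
  constructor
  · rintro ⟨P, _, _, π, hπ, ⟨g⟩⟩
    refine ⟨P, _, _, π, (LinearMap.ker π).subtype ∘ₗ g.toLinearMap, hπ,
      Subtype.val_injective.comp g.injective, ?_⟩
    rw [LinearMap.exact_iff, LinearMap.range_comp, LinearEquiv.range, Submodule.map_top,
      Submodule.range_subtype]
  · rintro ⟨P, _, _, π, ι, hπ, hι, hex⟩
    exact ⟨P, _, _, π, hπ,
      ⟨(LinearEquiv.ofInjective ι hι).trans (LinearEquiv.ofEq _ _ hex.linearMap_ker_eq.symm)⟩⟩

theorem LinearEquiv.smul_eq_zero_of_forall {R : Type u} [Ring R] {X Y : Type*} [AddCommGroup X]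
    [Module R X] [AddCommGroup Y] [Module R Y] (f : X ≃ₗ[R] Y) {r : R}
    (h : ∀ x : X, r • x = 0) (y : Y) : r • y = 0 := by
  rw [← f.apply_symm_apply y, ← map_smul, h, map_zero]

theorem eTopRank_zero (K : Type u) [Field K] {R : Type u} [Ring R] [Algebra K R] (M : Type v)
    [AddCommGroup M] [Module R M] : eTopRank K R 0 M = 0 := by
  simp [eTopRank]

theorem IsPrimitiveIdem.mul_eq_zero_or_eq {R : Type u} [Ring R] {g x : R}
    (hg : IsPrimitiveIdem R g) (hx : IsIdempotentElem x) (hgx : g * x = x) :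
    x * g = 0 ∨ x * g = g := by
  have hgg : g * g = g := hg.1
  have hxg : IsIdempotentElem (x * g) := by
    show x * g * (x * g) = x * g
    rw [mul_assoc, ← mul_assoc g, hgx, ← mul_assoc, hx.eq]
  have hrest : IsIdempotentElem (g - x * g) := by
    show (g - x * g) * (g - x * g) = g - x * g
    rw [mul_sub, sub_mul, sub_mul, hgg, ← mul_assoc g x, hgx, mul_assoc x g g, hgg, hxg.eq]
    abel
  have horth₁ : x * g * (g - x * g) = 0 := by
    rw [mul_sub, mul_assoc, hgg, hxg.eq, sub_self]
  have horth₂ : (g - x * g) * (x * g) = 0 := by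
    rw [sub_mul, ← mul_assoc g x, hgx, hxg.eq, sub_self]
  refine (hg.2.2 _ _ hxg hrest horth₁ horth₂ (add_sub_cancel _ _)).imp id fun h => ?_
  exact (sub_eq_zero.1 h).symm

namespace Corner

variable {Λ : Type u} [Ring Λ] {e : Λ} {he : IsIdempotentElem e}

@[simp] theorem val_zero : (0 : Corner e he).1 = 0 := rfl
@[simp] theorem val_one : (1 : Corner e he).1 = e := rfl
@[simp] theorem val_add (x y : Corner e he) : (x + y).1 = x.1 + y.1 := rfl
@[simp] theorem val_mul (x y : Corner e he) : (x * y).1 = x.1 * y.1 := rfl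
@[simp] theorem val_sub (x y : Corner e he) : (x - y).1 = x.1 - y.1 := by
  rw [sub_eq_add_neg, sub_eq_add_neg]
  rfl

theorem idem_mul_val (x : Corner e he) : e * x.1 = x.1 := x.2.1
theorem val_mul_idem (x : Corner e he) : x.1 * e = x.1 := x.2.2

end Corner

/-- Condition (a): `Λ` is upper triangular in its Peirce decomposition along `e' + e'' = 1`. -/
structure IsTriangularPair {Λ : Type u} [Ring Λ] (e' e'' : Λ) : Prop where
  idem : IsIdempotentElem e'
  add_eq_one : e' + e'' = 1
  mul_mul_eq_zero : ∀ x : Λ, e'' * x * e' = 0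

namespace IsTriangularPair

variable {Λ : Type u} [Ring Λ] {e' e'' : Λ} (ht : IsTriangularPair e' e'')

local notation "R'" => Corner e' ht.idem
local notation "ρ" => cornerHom e' e'' ht.idem ht.add_eq_one ht.mul_mul_eq_zero

include ht in
theorem mul_eq_zero : e'' * e' = 0 := by
  rw [eq_sub_of_add_eq' ht.add_eq_one]
  exact ht.idem.one_sub_mul_self

include ht in
theorem idem_compl : IsIdempotentElem e'' := by
  rw [eq_sub_of_add_eq' ht.add_eq_one]
  exact ht.idem.one_sub

include ht in
theorem mul_mul_eq_mul (j : Λ) : e'' * j * e'' = e'' * j := by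
  have h : e'' * j * e' + e'' * j * e'' = e'' * j := by rw [← mul_add, ht.add_eq_one, mul_one]
  rwa [ht.mul_mul_eq_zero, zero_add] at h

theorem cornerHom_val (x : R') : ρ x.1 = x :=
  Subtype.ext (show e' * x.1 * e' = x.1 by rw [x.idem_mul_val, x.val_mul_idem])

theorem val_cornerHom (a : Λ) : (ρ a).1 = a * e' := by
  have h : e' * a * e' + e'' * a * e' = a * e' := by
    rw [← add_mul, ← add_mul, ht.add_eq_one, one_mul]
  rwa [ht.mul_mul_eq_zero, add_zero] at h

theorem cornerHom_algebraMap {K : Type u} [CommSemiring K] [Algebra K Λ] (k : K) :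
    ρ (algebraMap K Λ k) = algebraMap K R' k := by
  refine Subtype.ext ?_
  rw [ht.val_cornerHom, Algebra.algebraMap_eq_smul_one, Algebra.algebraMap_eq_smul_one,
    smul_mul_assoc, one_mul]
  rfl

theorem isPrimitiveIdem_cornerHom {g : Λ} (hg : IsPrimitiveIdem Λ g) :
    ρ g = 0 ∨ IsPrimitiveIdem R' (ρ g) := by
  have hgg : g * g = g := hg.1
  have hval := ht.val_cornerHom g
  -- `g e' = e' g e'` is an idempotent below `g`
  have hx : IsIdempotentElem (g * e') := by
    show g * e' * (g * e') = g * e'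
    rw [← hval, ← Corner.val_mul, ← map_mul, hgg]
  have hgx : g * (g * e') = g * e' := by rw [← mul_assoc, hgg]
  rcases hg.mul_eq_zero_or_eq hx hgx with h0 | hg1
  · left
    refine Subtype.ext ?_
    rw [hval, ← hx.eq, ← mul_assoc, h0, zero_mul, Corner.val_zero]
  right
  have hbelow : ∀ r : R', IsIdempotentElem r → r * ρ g = r → ρ g * r = r →
      r = 0 ∨ r.1 * g = g := by
    intro r hr hrg hgr
    have hgr' : g * r.1 = r.1 :=
      calc g * r.1 = (ρ g * r).1 := by rw [Corner.val_mul, hval, mul_assoc, r.idem_mul_val]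
        _ = r.1 := by rw [hgr]
    refine (hg.mul_eq_zero_or_eq (congrArg Subtype.val hr) hgr').imp (fun h => ?_) id
    refine Subtype.ext ?_
    rw [← hrg, Corner.val_mul, hval, ← mul_assoc, h, zero_mul, Corner.val_zero]
  refine ⟨hg.1.map ρ, fun h => hg.2.1 ?_, fun p q hp hq hpq hqp hpq_add => ?_⟩
  · rw [← hg1, ← hval, h, Corner.val_zero, zero_mul]
  have hpg : p * ρ g = p := by rw [← hpq_add, mul_add, hp.eq, hpq, add_zero]
  have hgp : ρ g * p = p := by rw [← hpq_add, add_mul, hp.eq, hqp, add_zero]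
  have hqg : q * ρ g = q := by rw [← hpq_add, mul_add, hq.eq, hqp, zero_add]
  have hgq : ρ g * q = q := by rw [← hpq_add, add_mul, hq.eq, hpq, zero_add]
  rcases hbelow p hp hpg hgp with h | hp'
  · exact Or.inl h
  rcases hbelow q hq hqg hgq with h | hq'
  · exact Or.inr h
  refine absurd ?_ hg.2.1
  rw [← hq', ← hp', ← mul_assoc, ← Corner.val_mul, hqp, Corner.val_zero, zero_mul]

theorem cornerHom_mem_ringJac {j : Λ} (hj : j ∈ ringJac Λ) : ρ j ∈ ringJac R' := by
  have : RingHomSurjective ρ := ⟨fun x => ⟨x.1, ht.cornerHom_val x⟩⟩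
  rw [ringJac, Ideal.jacobson_bot] at hj ⊢
  exact Ring.le_comap_jacobson ρ hj

theorem val_mem_ringJac {x : R'} (hx : x ∈ ringJac R') : x.1 ∈ ringJac Λ := by
  refine Ideal.mem_jacobson_iff.2 fun y => ?_
  obtain ⟨z, hz⟩ := Ideal.mem_jacobson_iff.1 hx (ρ y)
  rw [Ideal.mem_bot] at hz
  have hz' := congrArg Subtype.val hz
  simp only [Corner.val_sub, Corner.val_add, Corner.val_mul, Corner.val_one,
    Corner.val_zero, ht.val_cornerHom] at hz'
  -- `z + e''` is a left inverse of `1 + y x` in `Λ`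
  refine ⟨z.1 + e'', Ideal.mem_bot.2 ?_⟩
  have hyx : y * x.1 = y * e' * x.1 := by rw [mul_assoc, x.idem_mul_val]
  have hzx : e'' * y * x.1 = 0 := by
    rw [mul_assoc, hyx, ← mul_assoc, ← mul_assoc, ht.mul_mul_eq_zero, zero_mul]
  have hzyx : z.1 * y * x.1 = z.1 * (y * e') * x.1 := by rw [mul_assoc z.1, hyx, mul_assoc z.1]
  rw [add_mul, add_mul, hzyx, hzx, add_zero, ← ht.add_eq_one, ← hz']
  abel

end IsTriangularPair

/-- The `e'Λe'`-module structure of `M` is the restriction of its `Λ`-module structure. -/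
def CornerCompatible {Λ : Type u} [Ring Λ] {e' : Λ} (he' : IsIdempotentElem e') (M : Type v)
    [AddCommGroup M] [Module Λ M] [Module (Corner e' he') M] : Prop :=
  ∀ (a : Corner e' he') (m : M), a • m = a.1 • m

theorem CornerCompatible.idem_smul {Λ : Type u} [Ring Λ] {e' : Λ} {he' : IsIdempotentElem e'}
    {M : Type v} [AddCommGroup M] [Module Λ M] [Module (Corner e' he') M]
    (hM : CornerCompatible he' M) (m : M) : e' • m = m :=
  (hM 1 m).symm.trans (one_smul _ m)

namespace IsTriangularPair

variable {Λ : Type u} [Ring Λ] {e' e'' : Λ} (ht : IsTriangularPair e' e'')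

local notation "R'" => Corner e' ht.idem
local notation "ρ" => cornerHom e' e'' ht.idem ht.add_eq_one ht.mul_mul_eq_zero

theorem _root_.CornerCompatible.smul_eq_zero {M : Type v} [AddCommGroup M] [Module Λ M]
    [Module (Corner e' ht.idem) M] (hM : CornerCompatible ht.idem M) (m : M) : e'' • m = 0 := by
  rw [← hM.idem_smul m, smul_smul, ht.mul_eq_zero, zero_smul]

theorem _root_.CornerCompatible.smul_eq {M : Type v} [AddCommGroup M] [Module Λ M]
    [Module (Corner e' ht.idem) M] (hM : CornerCompatible ht.idem M) (a : Λ) (m : M) :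
    a • m = ρ a • m := by
  rw [hM, ht.val_cornerHom, mul_smul, hM.idem_smul]

abbrev cornerModule (N : Type v) [AddCommGroup N] [Module Λ N] (hN : ∀ n : N, e'' • n = 0) :
    Module (Corner e' ht.idem) N where
  smul a n := a.1 • n
  one_smul n := by
    have h := one_smul Λ n
    rwa [← ht.add_eq_one, add_smul, hN, add_zero] at h
  mul_smul a b := mul_smul a.1 b.1
  smul_zero a := smul_zero a.1
  smul_add a := smul_add a.1
  add_smul a b := add_smul a.1 b.1
  zero_smul := zero_smul Λ

theorem cornerCompatible_cornerModule (N : Type v) [AddCommGroup N] [Module Λ N]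
    (hN : ∀ n : N, e'' • n = 0) :
    letI := ht.cornerModule N hN; CornerCompatible ht.idem N :=
  fun _ _ => rfl

theorem cornerCompatible_compHom (M : Type v) [AddCommGroup M] [Module (Corner e' ht.idem) M] :
    letI := Module.compHom M ρ; CornerCompatible ht.idem M := by
  intro a m
  show a • m = ρ a.1 • m
  rw [ht.cornerHom_val]

theorem cornerCompatible_finsupp (P : Type v) :
    letI := Module.compHom R' ρ; CornerCompatible ht.idem (P →₀ R') := by
  let := Module.compHom R' ρ
  intro a f
  ext i
  show a * f i = ρ a.1 * f i
  rw [ht.cornerHom_val]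

theorem projective_corner : letI := Module.compHom R' ρ; Module.Projective Λ R' := by
  let := Module.compHom R' ρ
  -- `Λ' = Λe'` is a direct summand of `Λ`
  refine .of_split (M := Λ) ⟨⟨Subtype.val, fun _ _ => rfl⟩, fun a x => ?_⟩
    ⟨⟨ρ, map_add ρ⟩, map_mul ρ⟩ (LinearMap.ext ht.cornerHom_val)
  show (ρ a * x).1 = a * x.1
  rw [Corner.val_mul, ht.val_cornerHom, mul_assoc, x.idem_mul_val]

end IsTriangularPair

section LinearMaps

variable {Λ : Type u} [Ring Λ] {e' e'' : Λ}
  {M N : Type*} [AddCommGroup M] [Module Λ M] [AddCommGroup N] [Module Λ N]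

def LinearMap.toCorner {he' : IsIdempotentElem e'} [Module (Corner e' he') M]
    [Module (Corner e' he') N] (hM : CornerCompatible he' M) (hN : CornerCompatible he' N)
    (f : M →ₗ[Λ] N) : M →ₗ[Corner e' he'] N where
  toFun := f
  map_add' := f.map_add
  map_smul' a m := by rw [hM, hN]; exact f.map_smul a.1 m

def LinearMap.ofCorner (ht : IsTriangularPair e' e'') [Module (Corner e' ht.idem) M]
    [Module (Corner e' ht.idem) N] (hM : CornerCompatible ht.idem M)
    (hN : CornerCompatible ht.idem N) (f : M →ₗ[Corner e' ht.idem] N) : M →ₗ[Λ] N where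
  toFun := f
  map_add' := f.map_add
  map_smul' a m := by rw [hM.smul_eq ht, hN.smul_eq ht]; exact f.map_smul _ m

end LinearMaps

namespace CornerCompatible

variable {Λ : Type u} [Ring Λ] {e' e'' : Λ} (ht : IsTriangularPair e' e'')
  {M N P : Type v} [AddCommGroup M] [Module Λ M] [Module (Corner e' ht.idem) M]
  [AddCommGroup N] [Module Λ N] [Module (Corner e' ht.idem) N]
  [AddCommGroup P] [Module Λ P] [Module (Corner e' ht.idem) P]

local notation "R'" => Corner e' ht.idem
local notation "ρ" => cornerHom e' e'' ht.idem ht.add_eq_one ht.mul_mul_eq_zero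

theorem projective_iff (hP : CornerCompatible ht.idem P) :
    Module.Projective Λ P ↔ Module.Projective R' P := by
  let := Module.compHom R' ρ
  have hF := ht.cornerCompatible_finsupp P
  constructor <;> intro
  · obtain ⟨s, hs⟩ := Module.projective_lifting_property
      ((Finsupp.linearCombination R' (id : P → P)).ofCorner ht hF hP) LinearMap.id
      (Finsupp.linearCombination_surjective R' Function.surjective_id)
    exact .of_split (s.toCorner hP hF) (Finsupp.linearCombination R' (id : P → P))
      (LinearMap.ext fun p => LinearMap.congr_fun hs p)
  · have := ht.projective_corner
    have : Module.Projective Λ (P →₀ R') := by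
      classical exact .of_equiv' (finsuppLequivDFinsupp Λ).symm
    obtain ⟨s, hs⟩ := Module.projective_def'.1 ‹Module.Projective R' P›
    exact .of_split (s.ofCorner ht hP hF)
      ((Finsupp.linearCombination R' (id : P → P)).ofCorner ht hF hP)
      (LinearMap.ext fun p => LinearMap.congr_fun hs p)

theorem mem_ringJac_smul_top_iff (hM : CornerCompatible ht.idem M) (m : M) :
    m ∈ ringJac Λ • (⊤ : Submodule Λ M) ↔ m ∈ ringJac R' • (⊤ : Submodule R' M) := by
  constructor <;> intro hm
  · refine Submodule.smul_induction_on hm (fun j hj q _ => ?_) (fun _ _ => add_mem)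
    rw [hM.smul_eq ht]
    exact Submodule.smul_mem_smul (ht.cornerHom_mem_ringJac hj) Submodule.mem_top
  · refine Submodule.smul_induction_on hm (fun a ha q _ => ?_) (fun _ _ => add_mem)
    rw [hM]
    exact Submodule.smul_mem_smul (ht.val_mem_ringJac ha) Submodule.mem_top

theorem isProjCover_iff (hP : CornerCompatible ht.idem P) {π : P →ₗ[Λ] N} {π' : P →ₗ[R'] N}
    (h : ⇑π = ⇑π') : IsProjCover Λ π ↔ IsProjCover R' π' := by
  unfold IsProjCover
  rw [hP.projective_iff ht, h]
  refine and_congr_right' (and_congr_right' ?_)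
  simp only [SetLike.le_def, LinearMap.mem_ker, h, hP.mem_ringJac_smul_top_iff ht]

theorem finite (hM : CornerCompatible ht.idem M) [Module.Finite R' M] : Module.Finite Λ M := by
  obtain ⟨S, hS⟩ := Module.Finite.fg_top (R := R') (M := M)
  let W : Submodule R' M :=
    { carrier := Submodule.span Λ (S : Set M)
      add_mem' := add_mem
      zero_mem' := zero_mem _
      smul_mem' := fun a m hm => by rw [hM]; exact Submodule.smul_mem _ _ hm }
  have hSW : Submodule.span R' (S : Set M) ≤ W := Submodule.span_le.2 Submodule.subset_span
  exact ⟨⟨S, eq_top_iff.2 fun m _ => hSW (hS ▸ Submodule.mem_top)⟩⟩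

theorem eTopRank_eq (K : Type u) [Field K] [Algebra K Λ] (hM : CornerCompatible ht.idem M)
    (g : Λ) : eTopRank K Λ g M = eTopRank K R' (ρ g) M := by
  have hJ : (ringJac Λ • ⊤ : Submodule Λ M).toAddSubgroup =
      (ringJac R' • ⊤ : Submodule R' M).toAddSubgroup :=
    AddSubgroup.ext (hM.mem_ringJac_smul_top_iff ht)
  let E : topQuot Λ M ≃+ topQuot R' M := QuotientAddGroup.quotientAddEquivOfEq hJ
  have hE : ∀ (a : Λ) (t : topQuot Λ M), E (a • t) = ρ a • E t := by
    intro a t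
    induction t using Submodule.Quotient.induction_on with
    | H m => exact congrArg Submodule.Quotient.mk (hM.smul_eq ht a m)
  let _ : Module K (topQuot Λ M) := Module.compHom _ (algebraMap K Λ)
  let _ : Module K (topQuot R' M) := Module.compHom _ (algebraMap K R')
  let EK : topQuot Λ M ≃ₗ[K] topQuot R' M :=
    { E with
      map_smul' := fun k t => show E (algebraMap K Λ k • t) = algebraMap K R' k • E t by
        rw [hE, ht.cornerHom_algebraMap] }
  have hrange : EK '' Set.range (g • · : topQuot Λ M → _) =
      Set.range (ρ g • · : topQuot R' M → _) := by
    rw [← Set.range_comp, show EK ∘ (g • ·) = (ρ g • ·) ∘ EK from funext (hE g),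
      EK.surjective.range_comp]
  show Module.rank K (Submodule.span K (Set.range (g • · : topQuot Λ M → _))) =
    Module.rank K (Submodule.span K (Set.range (ρ g • · : topQuot R' M → _)))
  rw [← hrange, Submodule.span_image_linearEquiv, EK.rank_map_eq]

end CornerCompatible

namespace IsTriangularPair

variable {Λ : Type u} [Ring Λ] {e' e'' : Λ} (ht : IsTriangularPair e' e'') [IsArtinianRing Λ]

include ht in
/-- `W = Λe''P` lies in `ker π ⊆ JP`, and `e''J = e''Je''` gives `W ≤ JW`, so `W = 0` since `J`
is nilpotent. -/
theorem smul_eq_zero_of_isProjCover {P N : Type v} [AddCommGroup P] [Module Λ P]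
    [AddCommGroup N] [Module Λ N] {π : P →ₗ[Λ] N} (hπ : IsProjCover Λ π)
    (hN : ∀ n : N, e'' • n = 0) (p : P) : e'' • p = 0 := by
  set W := Submodule.span Λ (Set.range (e'' • · : P → P))
  have hJ : ∀ y ∈ ringJac Λ • (⊤ : Submodule Λ P), e'' • y ∈ ringJac Λ • W := by
    intro y hy
    refine Submodule.smul_induction_on hy (fun j hj q _ => ?_)
      (fun _ _ hx hy => by rw [smul_add]; exact add_mem hx hy)
    rw [smul_smul, ← ht.mul_mul_eq_mul, mul_smul]
    exact Submodule.smul_mem_smul (Ideal.mul_mem_left _ _ hj) (Submodule.subset_span ⟨q, rfl⟩)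
  have hW : W ≤ ringJac Λ • W := Submodule.span_le.2 <| by
    rintro _ ⟨q, rfl⟩
    have hker : e'' • q ∈ LinearMap.ker π := by rw [LinearMap.mem_ker, map_smul, hN]
    simpa only [smul_smul, ht.idem_compl.eq, SetLike.mem_coe] using hJ _ (hπ.2.2 hker)
  have hbot := Submodule.eq_bot_of_le_smul_of_isNilpotent IsArtinianRing.isNilpotent_jacobson_bot hW
  have hp : e'' • p ∈ W := Submodule.subset_span ⟨p, rfl⟩
  rwa [hbot, Submodule.mem_bot] at hp

include ht in
theorem smul_eq_zero_of_isSyz1 {N X : Type v} [AddCommGroup N] [Module Λ N] [AddCommGroup X]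
    [Module Λ X] (h : IsSyz1 Λ N X) (hN : ∀ n : N, e'' • n = 0) (x : X) : e'' • x = 0 := by
  obtain ⟨P, _, _, π, ι, hπ, hι, -⟩ := isSyz1_iff.1 h
  apply hι
  rw [map_smul, map_zero, ht.smul_eq_zero_of_isProjCover hπ hN]

include ht in
theorem smul_eq_zero_of_isSyz1_chain {n : ℕ} {M : Fin (n + 1) → Type v}
    [∀ i, AddCommGroup (M i)] [∀ i, Module Λ (M i)]
    (hM : ∀ i : Fin n, IsSyz1 Λ (M i.castSucc) (M i.succ)) (h₀ : ∀ x : M 0, e'' • x = 0)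
    (i : Fin (n + 1)) (x : M i) : e'' • x = 0 := by
  induction i using Fin.induction with
  | zero => exact h₀ x
  | succ i ih => exact ht.smul_eq_zero_of_isSyz1 (hM i) ih x

include ht in
theorem smul_eq_zero_of_isSyz {n : ℕ} {N X : Type v} [AddCommGroup N] [Module Λ N]
    [AddCommGroup X] [Module Λ X] (h : IsSyz Λ n N X) (hN : ∀ n : N, e'' • n = 0)
    (x : X) : e'' • x = 0 := by
  obtain ⟨M, _, _, ⟨g₀⟩, ⟨g⟩, hM⟩ := h
  exact g.smul_eq_zero_of_forall
    (ht.smul_eq_zero_of_isSyz1_chain hM (g₀.symm.smul_eq_zero_of_forall hN) _) x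

end IsTriangularPair

namespace CornerCompatible

variable {Λ : Type u} [Ring Λ] {e' e'' : Λ} (ht : IsTriangularPair e' e'') [IsArtinianRing Λ]
  {N X : Type v} [AddCommGroup N] [Module Λ N] [Module (Corner e' ht.idem) N]
  [AddCommGroup X] [Module Λ X] [Module (Corner e' ht.idem) X]

local notation "R'" => Corner e' ht.idem
local notation "ρ" => cornerHom e' e'' ht.idem ht.add_eq_one ht.mul_mul_eq_zero

theorem isSyz1_iff (hN : CornerCompatible ht.idem N) (hX : CornerCompatible ht.idem X) :
    IsSyz1 Λ N X ↔ IsSyz1 R' N X := by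
  rw [_root_.isSyz1_iff, _root_.isSyz1_iff]
  constructor
  · rintro ⟨P, _, _, π, ι, hπ, hι, hex⟩
    have hk := ht.smul_eq_zero_of_isProjCover hπ (hN.smul_eq_zero ht)
    let _ := ht.cornerModule P hk
    have hP := ht.cornerCompatible_cornerModule P hk
    exact ⟨P, _, _, π.toCorner hP hN, ι.toCorner hX hP, (hP.isProjCover_iff ht rfl).1 hπ, hι, hex⟩
  · rintro ⟨P, _, _, π, ι, hπ, hι, hex⟩
    let _ := Module.compHom P ρ
    have hP := ht.cornerCompatible_compHom P
    exact ⟨P, _, _, π.ofCorner ht hP hN, ι.ofCorner ht hX hP, (hP.isProjCover_iff ht rfl).2 hπ,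
      hι, hex⟩

theorem isSyz_iff {n : ℕ} (hN : CornerCompatible ht.idem N) (hX : CornerCompatible ht.idem X) :
    IsSyz Λ n N X ↔ IsSyz R' n N X := by
  constructor
  · rintro ⟨M, _, _, ⟨g₀⟩, ⟨g⟩, hM⟩
    have hk := ht.smul_eq_zero_of_isSyz1_chain hM
      (g₀.symm.smul_eq_zero_of_forall (hN.smul_eq_zero ht))
    let _ : ∀ i, Module R' (M i) := fun i => ht.cornerModule (M i) (hk i)
    have hc : ∀ i, CornerCompatible ht.idem (M i) :=
      fun i => ht.cornerCompatible_cornerModule (M i) (hk i)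
    exact ⟨M, _, _, ⟨.ofBijective (g₀.toLinearMap.toCorner (hc 0) hN) g₀.bijective⟩,
      ⟨.ofBijective (g.toLinearMap.toCorner (hc _) hX) g.bijective⟩,
      fun i => ((hc _).isSyz1_iff ht (hc _)).1 (hM i)⟩
  · rintro ⟨M, _, _, ⟨g₀⟩, ⟨g⟩, hM⟩
    let _ : ∀ i, Module Λ (M i) := fun i => Module.compHom (M i) ρ
    have hc : ∀ i, CornerCompatible ht.idem (M i) := fun i => ht.cornerCompatible_compHom (M i)
    exact ⟨M, _, _, ⟨.ofBijective (g₀.toLinearMap.ofCorner ht (hc 0) hN) g₀.bijective⟩,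
      ⟨.ofBijective (g.toLinearMap.ofCorner ht (hc _) hX) g.bijective⟩,
      fun i => ((hc _).isSyz1_iff ht (hc _)).2 (hM i)⟩

theorem pdim_eq (hN : CornerCompatible ht.idem N) : pdim Λ N = pdim R' N := by
  unfold pdim
  congr 1
  ext d
  constructor
  · rintro ⟨n, rfl, X, _, _, hX, hproj⟩
    have hk := ht.smul_eq_zero_of_isSyz hX (hN.smul_eq_zero ht)
    let _ := ht.cornerModule X hk
    have hc := ht.cornerCompatible_cornerModule X hk
    exact ⟨n, rfl, X, _, _, (hN.isSyz_iff ht hc).1 hX, (hc.projective_iff ht).1 hproj⟩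
  · rintro ⟨n, rfl, X, _, _, hX, hproj⟩
    let _ := Module.compHom X ρ
    have hc := ht.cornerCompatible_compHom X
    exact ⟨n, rfl, X, _, _, (hN.isSyz_iff ht hc).2 hX, (hc.projective_iff ht).2 hproj⟩

end CornerCompatible

theorem stacking_findimN_le_general
    (K : Type) [Field K] (Λ : Type) [Ring Λ] [Algebra K Λ] [FiniteDimensional K Λ]
    (e' e'' : Λ)
    (he' : IsIdempotentElem e') (hsum : e' + e'' = 1)
    -- condition (a) : e''Λe' = 0
    (hA : ∀ x : Λ, e'' * x * e' = 0)
 :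
    ∀ n : ℕ, 1 ≤ n → findimN K (Corner e' he') n ≤ findimN K Λ n := by
  intro n _
  have ht : IsTriangularPair e' e'' := ⟨he', hsum, hA⟩
  have : IsArtinianRing Λ := IsArtinianRing.of_finite K Λ
  refine sSup_le ?_
  rintro d ⟨M, _, _, _, rfl, hne, hrank⟩
  let _ : Module Λ M := Module.compHom M (cornerHom e' e'' he' hsum hA)
  have hM := ht.cornerCompatible_compHom M
  refine le_sSup ⟨M, _, _, hM.finite ht, hM.pdim_eq ht, hne, fun g hg => ?_⟩
  rw [hM.eTopRank_eq ht K g]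
  rcases ht.isPrimitiveIdem_cornerHom hg with h0 | hprim
  · rw [h0, eTopRank_zero]
    exact zero_le
  · exact hrank _ hprim

/-- Corollary 6, second part. For a stacking partition,
`fin dim_n Λ' ≤ fin dim_n Λ` for all `n ≥ 1`. -/
theorem stacking_findimN_le
    (K : Type) [Field K] (Λ : Type) [Ring Λ] [Algebra K Λ] [FiniteDimensional K Λ]
    (ι : Type) [Fintype ι] [DecidableEq ι] (e : ι → Λ)
    (hco : CompleteOrthogonalIdempotents e) (hprim : ∀ i, IsPrimitiveIdem Λ (e i))
    (S : Finset ι) (hS : S.Nonempty) (hS' : Sᶜ.Nonempty)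
    (e' e'' : Λ) (hd' : e' = ∑ i ∈ S, e i) (hd'' : e'' = ∑ i ∈ Sᶜ, e i)
    (he' : IsIdempotentElem e') (he'' : IsIdempotentElem e'') (hsum : e' + e'' = 1)
    -- condition (a) : e''Λe' = 0
    (hA : ∀ x : Λ, e'' * x * e' = 0)
    -- condition (b) : e'Λe''·J·f = 0 for every f ∈ E with fJ ≠ 0
    (hB : ∀ i : ι, (∃ j ∈ ringJac Λ, e i * j ≠ 0) →
      ∀ x j, j ∈ ringJac Λ → e' * x * e'' * j * e i = 0)
 :
    ∀ n : ℕ, 1 ≤ n → findimN K (Corner e' he') n ≤ findimN K Λ n :=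
  stacking_findimN_le_general K Λ e' e'' he' hsum hA
end
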